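/- arXiv:1911.06198 — 3 statements merged into one kernel-verified Lean document; each statement's English description precedes it below -/
import Mathlib

section
/- In the deterministic election model, let δ ∈ ℕ with δ ≥ 1 and δ ≥ π_v(i) − π_v(0) for every voter v and every candidate index i. Suppose every seed s ∈ S sends the message m_s with m_s(0) = δ and m_s(i) = 0 for all i ≠ 0, and let infl denote the set of influenced voters. Then after the diffusion every influenced voter votes for c_0; more precisely V*_{c_0} = V_{c_0} ∪ infl and V*_c = V_c ∖ infl for every candidate c ≠ c_0; consequently ΔMoV^S(S,M) ≥ |infl ∖ V_{c_0}| ≥ 0. -/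
open scoped Classical

noncomputable section

/-- `v` is reachable from `s` through the edge set `Es` (every node reaches itself). -/
def Reaches {V : Type*} (Es : Set (V × V)) (s v : V) : Prop :=
  Relation.ReflTransGen (fun a b => (a, b) ∈ Es) s v

/-- The set of influenced voters: those reachable from some seed in `S`. -/
def influenced {V : Type*} [Fintype V] (Es : Set (V × V)) (S : Set V) : Finset V :=
  Finset.univ.filter (fun v => ∃ s ∈ S, Reaches Es s v)

/-- χ(S,E): the number of influenced voters. -/
def chi {V : Type*} [Fintype V] (Es : Set (V × V)) (S : Set V) : ℕ :=
  (influenced Es S).card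

/-- The tie-breaking constant ε = 1/(1 + max_{v,i} π_v(i)). -/
def eps {V : Type*} [Fintype V] {k : ℕ} (π : V → Fin k → ℕ) : ℚ :=
  1 / (1 + ((Finset.univ.sup fun v => Finset.univ.sup fun i => π v i : ℕ) : ℚ))

/-- The final score π*_v(i) = (1-ε)·π_v(i) + Σ_{s ∈ S, v reachable from s} m_s(i). -/
def finalScore {V : Type*} [Fintype V] {k : ℕ} (Es : Set (V × V)) (π : V → Fin k → ℕ)
    (S : Set V) (m : V → Fin k → ℤ) (v : V) (i : Fin k) : ℚ :=
  (1 - eps π) * (π v i : ℚ) +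
    ∑ s ∈ Finset.univ.filter (fun s => s ∈ S ∧ Reaches Es s v), (m s i : ℚ)

/-- V_c: voters whose initial score vector has a strict maximum at `c`. -/
def initVoters {V : Type*} [Fintype V] {k : ℕ} (π : V → Fin k → ℕ) (c : Fin k) : Finset V :=
  Finset.univ.filter (fun v => ∀ j, j ≠ c → π v j < π v c)

/-- V*_c: voters whose final score vector has a strict maximum at `c`. -/
def finalVoters {V : Type*} [Fintype V] {k : ℕ} (Es : Set (V × V)) (π : V → Fin k → ℕ)
    (S : Set V) (m : V → Fin k → ℤ) (c : Fin k) : Finset V :=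
  Finset.univ.filter (fun v => ∀ j, j ≠ c →
    finalScore Es π S m v j < finalScore Es π S m v c)

/-- MoV(S,M,E) = |V*_{c_0}| − max_{c ≠ c_0} |V*_c|. -/
def MoV {V : Type*} [Fintype V] {k : ℕ} [NeZero k] (Es : Set (V × V)) (π : V → Fin k → ℕ)
    (S : Set V) (m : V → Fin k → ℤ) : ℤ :=
  ((finalVoters Es π S m 0).card : ℤ) -
    (((Finset.univ.erase (0 : Fin k)).sup fun c => (finalVoters Es π S m c).card : ℕ) : ℤ)

/-- |M|: the total budget used by seed set `S` with messages `m`. -/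
def totalBudget {V : Type*} [Fintype V] {k : ℕ} (S : Set V) (m : V → Fin k → ℤ) : ℕ :=
  ∑ s ∈ Finset.univ.filter (fun s => s ∈ S), ∑ i, (m s i).natAbs

end

/-! A seed's message adds `δ` to candidate `0` and nothing else, so an influenced voter gains at
least `δ` on `c₀`. Since `0 < ε`, the damped initial gap `(1 - ε)(π_v(i) - π_v(0))` is strictly
below `δ` when positive and at most `0 < δ` otherwise, so `c₀` becomes the strict maximum. An
uninfluenced voter's scores are all scaled by `1 - ε ≥ 0`, which preserves strict maxima (if
`1 - ε = 0` every initial score is `0` and neither side has a strict maximum). -/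

open Finset

section Election

variable {V : Type*} [Fintype V] {k : ℕ}

lemma le_sup_scores (π : V → Fin k → ℕ) (v : V) (i : Fin k) :
    π v i ≤ univ.sup fun v => univ.sup fun i => π v i :=
  (le_sup (f := fun i => π v i) (mem_univ i)).trans
    (le_sup (f := fun v => univ.sup fun i => π v i) (mem_univ v))

lemma eps_pos (π : V → Fin k → ℕ) : 0 < eps π := by
  unfold eps
  positivity

lemma eps_le_one (π : V → Fin k → ℕ) : eps π ≤ 1 := by
  unfold eps
  rw [div_le_one (by positivity)]
  simp

lemma eps_lt_one_of_pos {π : V → Fin k → ℕ} {v : V} {i : Fin k} (h : 0 < π v i) :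
    eps π < 1 := by
  have hM : (1 : ℚ) ≤ ((univ.sup fun v => univ.sup fun i => π v i : ℕ) : ℚ) := by
    exact_mod_cast h.trans_le (le_sup_scores π v i)
  unfold eps
  rw [div_lt_one (by positivity)]
  linarith

lemma one_sub_eps_mul_lt_iff (π : V → Fin k → ℕ) (v : V) (i j : Fin k) :
    (1 - eps π) * π v i < (1 - eps π) * π v j ↔ π v i < π v j := by
  constructor
  · intro h
    by_contra! hji
    exact h.not_ge <| mul_le_mul_of_nonneg_left (by exact_mod_cast hji)
      (sub_nonneg.mpr (eps_le_one π))
  · intro h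
    have hε : 0 < 1 - eps π := sub_pos.mpr (eps_lt_one_of_pos (Nat.zero_lt_of_lt h))
    exact mul_lt_mul_of_pos_left (by exact_mod_cast h) hε

lemma eq_of_mem_finalVoters {Es : Set (V × V)} {π : V → Fin k → ℕ} {S : Set V}
    {m : V → Fin k → ℤ} {v : V} {c c' : Fin k} (hc : v ∈ finalVoters Es π S m c)
    (hc' : v ∈ finalVoters Es π S m c') : c = c' := by
  simp only [finalVoters, mem_filter, mem_univ, true_and] at hc hc'
  by_contra hne
  exact (hc c' (Ne.symm hne)).not_gt (hc' c hne)

lemma seeds_reaching_eq_empty {Es : Set (V × V)} {S : Set V} {v : V}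
    (hv : v ∉ influenced Es S) :
    univ.filter (fun s => s ∈ S ∧ Reaches Es s v) = ∅ := by
  simp only [influenced, mem_filter, mem_univ, true_and, not_exists, not_and] at hv
  exact filter_eq_empty_iff.mpr fun s _ hs => hv s hs.1 hs.2

lemma seeds_reaching_nonempty {Es : Set (V × V)} {S : Set V} {v : V}
    (hv : v ∈ influenced Es S) :
    (univ.filter (fun s => s ∈ S ∧ Reaches Es s v)).Nonempty := by
  simp only [influenced, mem_filter, mem_univ, true_and] at hv
  obtain ⟨s, hs, hsv⟩ := hv
  exact ⟨s, by simp [hs, hsv]⟩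

lemma finalScore_of_not_mem_influenced (Es : Set (V × V)) (π : V → Fin k → ℕ) {S : Set V}
    (m : V → Fin k → ℤ) {v : V} (hv : v ∉ influenced Es S) (i : Fin k) :
    finalScore Es π S m v i = (1 - eps π) * π v i := by
  rw [finalScore, seeds_reaching_eq_empty hv, sum_empty, add_zero]

lemma finalScore_of_forall_seed_eq (Es : Set (V × V)) (π : V → Fin k → ℕ) {S : Set V}
    {m : V → Fin k → ℤ} {i : Fin k} {a : ℤ} (hm : ∀ s ∈ S, m s i = a) (v : V) :
    finalScore Es π S m v i = (1 - eps π) * π v i +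
      #(univ.filter fun s => s ∈ S ∧ Reaches Es s v) * a := by
  rw [finalScore, ← nsmul_eq_mul, ← sum_const]
  congr 1
  refine sum_congr rfl fun s hs => ?_
  rw [hm s (mem_filter.mp hs).2.1]

lemma mem_finalVoters_iff_of_not_mem_influenced (Es : Set (V × V)) (π : V → Fin k → ℕ)
    {S : Set V} (m : V → Fin k → ℤ) {v : V} (hv : v ∉ influenced Es S) (c : Fin k) :
    v ∈ finalVoters Es π S m c ↔ v ∈ initVoters π c := by
  simp only [finalVoters, initVoters, mem_filter, mem_univ, true_and,
    finalScore_of_not_mem_influenced Es π m hv, one_sub_eps_mul_lt_iff]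

lemma finalVoters_empty (Es : Set (V × V)) (π : V → Fin k → ℕ) (m : V → Fin k → ℤ)
    (c : Fin k) : finalVoters Es π ∅ m c = initVoters π c := by
  ext v
  exact mem_finalVoters_iff_of_not_mem_influenced Es π m (by simp [influenced]) c

lemma damped_gap_lt {ε a b d : ℚ} (hε : 0 < ε) (hε1 : ε ≤ 1) (hd : 0 < d) (hab : a - b ≤ d) :
    (1 - ε) * a < (1 - ε) * b + d := by
  rcases le_or_gt a b with hle | hlt
  · nlinarith
  · nlinarith

variable [NeZero k]

lemma mem_finalVoters_zero_of_mem_influenced (Es : Set (V × V)) (π : V → Fin k → ℕ)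
    {S : Set V} {δ : ℕ} (hδ1 : 1 ≤ δ) (hδ : ∀ (v : V) (i : Fin k), (π v i : ℤ) - π v 0 ≤ δ)
    {m : V → Fin k → ℤ} (hm0 : ∀ s ∈ S, m s 0 = δ) (hmi : ∀ s ∈ S, ∀ i : Fin k, i ≠ 0 → m s i = 0)
    {v : V} (hv : v ∈ influenced Es S) : v ∈ finalVoters Es π S m 0 := by
  simp only [finalVoters, mem_filter, mem_univ, true_and]
  intro j hj
  rw [finalScore_of_forall_seed_eq Es π (hmi · · j hj), finalScore_of_forall_seed_eq Es π hm0]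
  have hn : (1 : ℚ) ≤ #(univ.filter fun s => s ∈ S ∧ Reaches Es s v) := by
    exact_mod_cast (seeds_reaching_nonempty hv).card_pos
  have hδ1' : (1 : ℚ) ≤ δ := by exact_mod_cast hδ1
  have hgap : (π v j : ℚ) - π v 0 ≤ δ := by exact_mod_cast hδ v j
  push_cast
  rw [mul_zero, add_zero]
  exact damped_gap_lt (eps_pos π) (eps_le_one π) (by positivity) (hgap.trans (by nlinarith))

lemma finalVoters_zero_eq_union (Es : Set (V × V)) (π : V → Fin k → ℕ)
    {S : Set V} {δ : ℕ} (hδ1 : 1 ≤ δ) (hδ : ∀ (v : V) (i : Fin k), (π v i : ℤ) - π v 0 ≤ δ)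
    {m : V → Fin k → ℤ} (hm0 : ∀ s ∈ S, m s 0 = δ) (hmi : ∀ s ∈ S, ∀ i : Fin k, i ≠ 0 → m s i = 0) :
    finalVoters Es π S m 0 = initVoters π 0 ∪ influenced Es S := by
  ext v
  by_cases hv : v ∈ influenced Es S
  · simp [hv, mem_finalVoters_zero_of_mem_influenced Es π hδ1 hδ hm0 hmi hv]
  · simp [hv, mem_finalVoters_iff_of_not_mem_influenced Es π m hv]

lemma finalVoters_eq_sdiff (Es : Set (V × V)) (π : V → Fin k → ℕ)
    {S : Set V} {δ : ℕ} (hδ1 : 1 ≤ δ) (hδ : ∀ (v : V) (i : Fin k), (π v i : ℤ) - π v 0 ≤ δ)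
    {m : V → Fin k → ℤ} (hm0 : ∀ s ∈ S, m s 0 = δ) (hmi : ∀ s ∈ S, ∀ i : Fin k, i ≠ 0 → m s i = 0)
    {c : Fin k} (hc : c ≠ 0) :
    finalVoters Es π S m c = initVoters π c \ influenced Es S := by
  ext v
  by_cases hv : v ∈ influenced Es S
  · have h0 := mem_finalVoters_zero_of_mem_influenced Es π hδ1 hδ hm0 hmi hv
    simpa [hv] using fun hvc => hc (eq_of_mem_finalVoters hvc h0)
  · simp [hv, mem_finalVoters_iff_of_not_mem_influenced Es π m hv]

lemma card_sdiff_le_MoV_sub_MoV_empty {Es : Set (V × V)} {π : V → Fin k → ℕ} {S : Set V}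
    {m : V → Fin k → ℤ} {T : Finset V} (h0 : finalVoters Es π S m 0 = initVoters π 0 ∪ T)
    (hc : ∀ c, c ≠ 0 → finalVoters Es π S m c ⊆ initVoters π c) :
    (#(T \ initVoters π 0) : ℤ) ≤ MoV Es π S m - MoV Es π ∅ m := by
  have hsup : ((univ.erase 0).sup fun c => #(finalVoters Es π S m c)) ≤
      (univ.erase 0).sup fun c => #(finalVoters Es π ∅ m c) := by
    refine sup_mono_fun fun c hc0 => ?_
    rw [finalVoters_empty]
    exact card_le_card (hc c (ne_of_mem_erase hc0))
  have hcard : #(finalVoters Es π S m 0) = #(initVoters π 0) + #(T \ initVoters π 0) := by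
    rw [h0, ← card_union_of_disjoint disjoint_sdiff, union_sdiff_self_eq_union]
  simp only [MoV, finalVoters_empty] at hsup ⊢
  omega

end Election

theorem seeding_with_delta_message_converts_influenced_general {V : Type*} [Fintype V]
    {k : ℕ} [NeZero k]
    (Es : Set (V × V)) (π : V → Fin k → ℕ)
    (S : Set V) (δ : ℕ) (hδ1 : 1 ≤ δ)
    (hδ : ∀ (v : V) (i : Fin k), (π v i : ℤ) - (π v 0 : ℤ) ≤ (δ : ℤ))
    (m : V → Fin k → ℤ)
    (hm0 : ∀ s ∈ S, m s 0 = (δ : ℤ))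
    (hmi : ∀ s ∈ S, ∀ i : Fin k, i ≠ 0 → m s i = 0) :
    finalVoters Es π S m 0 = initVoters π 0 ∪ influenced Es S ∧
    (∀ c : Fin k, c ≠ 0 → finalVoters Es π S m c = initVoters π c \ influenced Es S) ∧
    (0 : ℤ) ≤ ((influenced Es S \ initVoters π 0).card : ℤ) ∧
    ((influenced Es S \ initVoters π 0).card : ℤ) ≤
      MoV Es π S m - MoV Es π (∅ : Set V) m := by
  have h0 := finalVoters_zero_eq_union Es π hδ1 hδ hm0 hmi
  have hc := fun c (hc : c ≠ 0) => finalVoters_eq_sdiff Es π hδ1 hδ hm0 hmi hc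
  refine ⟨h0, hc, Int.natCast_nonneg _, card_sdiff_le_MoV_sub_MoV_empty h0 fun c hc0 => ?_⟩
  exact (hc c hc0).trans_subset sdiff_subset

/-- If every seed sends the message with δ positive news articles on c₀ (and nothing else),
where δ ≥ 1 and δ ≥ π_v(i) − π_v(0) for all v, i, then every influenced voter ends up voting
for c₀: V*₀ = V₀ ∪ infl and V*_c = V_c ∖ infl for c ≠ 0, whence
ΔMoV^S(S,M) ≥ |infl ∖ V₀| ≥ 0. -/
theorem seeding_with_delta_message_converts_influenced {V : Type*} [Fintype V]
    {k : ℕ} [NeZero k]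
    (Es : Set (V × V)) (π : V → Fin k → ℕ)
    (hinj : ∀ v : V, Function.Injective (π v))
    (S : Set V) (δ : ℕ) (hδ1 : 1 ≤ δ)
    (hδ : ∀ (v : V) (i : Fin k), (π v i : ℤ) - (π v 0 : ℤ) ≤ (δ : ℤ))
    (m : V → Fin k → ℤ)
    (hm0 : ∀ s ∈ S, m s 0 = (δ : ℤ))
    (hmi : ∀ s ∈ S, ∀ i : Fin k, i ≠ 0 → m s i = 0) :
    finalVoters Es π S m 0 = initVoters π 0 ∪ influenced Es S ∧
    (∀ c : Fin k, c ≠ 0 → finalVoters Es π S m c = initVoters π c \ influenced Es S) ∧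
    (0 : ℤ) ≤ ((influenced Es S \ initVoters π 0).card : ℤ) ∧
    ((influenced Es S \ initVoters π 0).card : ℤ) ≤
      MoV Es π S m - MoV Es π (∅ : Set V) m :=
  seeding_with_delta_message_converts_influenced_general Es π S δ hδ1 hδ m hm0 hmi
end

section
/- Let G=(X,N) be an undirected graph and B ≥ 1 an integer. Construct the deterministic election instance with two candidates c_0, c_1: a voter v_x with score vector ⟨1,0⟩ for each vertex x ∈ X, a voter v_e with score vector ⟨0,2⟩ for each edge e ∈ N, and a directed edge from v_x to v_e whenever x is an endpoint of e. Under single-news-article messages with budget B (a seed set of at most B voters is chosen, and all seeds send the same message, which consists of a single news article +1 or −1 on a single candidate), the maximum of ΔMoV^S over all feasible solutions equals 2·max{ e(X') : X' ⊆ X, |X'| ≤ B }, where e(X') is the number of edges of G with both endpoints in X'. -/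
/-!
With these scores `ε = 1/3`, so before any message a vertex voter leads for `c₀` and an edge
voter trails by `4/3`. A single article in favour of `c₀` (`+1` on `c₀` or `-1` on `c₁`) raises
every voter's lead by the number of seeds reaching it: vertex voters stay with `c₀`, and an edge
voter switches exactly when at least two seeds reach it, each switch gaining `2`. An article
against `c₀` can only lose votes. An edge is reached twice iff both endpoints are seeds, or it is
a seed itself with one endpoint seeded; trading each such seeded edge for its other endpoint
gives at most `B` vertices spanning all of them. Conversely, seeding the vertices of a densest
`B`-subgraph reaches each of its edges twice.
-/

open scoped Classical

section DkS

variable {X : Type*} [Fintype X] [DecidableEq X] (G : SimpleGraph X)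
  [DecidableRel G.Adj] [Fintype G.edgeSet]

/-- Voters: a node for each vertex of `G` and a node for each edge of `G`. -/
abbrev DkSVoter := X ⊕ G.edgeSet

/-- A directed edge from `v_x` to `v_e` whenever `x` is an endpoint of `e`. -/
def DkSEdges : Set (DkSVoter G × DkSVoter G) :=
  { p | ∃ (x : X) (e : G.edgeSet), x ∈ (e : Sym2 X) ∧
      p.1 = Sum.inl x ∧ p.2 = Sum.inr e }

/-- Scores: vertex-nodes have ⟨1,0⟩, edge-nodes have ⟨0,2⟩. -/
def DkSScores : DkSVoter G → Fin 2 → ℕ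
  | Sum.inl _ => ![1, 0]
  | Sum.inr _ => ![0, 2]

/-- e(X'): the number of edges of `G` with both endpoints in `X'`. -/
def edgesWithin (X' : Finset X) : ℕ :=
  (Finset.univ.filter fun e : G.edgeSet => ∀ x ∈ (e : Sym2 X), x ∈ X').card

end DkS

open Finset

theorem Relation.reflTransGen_iff_eq_or_of_forall_not {α : Type*} {r : α → α → Prop}
    (h : ∀ a b c, r a b → ¬ r b c) {a b : α} :
    Relation.ReflTransGen r a b ↔ b = a ∨ r a b := by
  refine ⟨fun hab => ?_, ?_⟩
  · induction hab with
    | refl => exact .inl rfl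
    | tail _ hbc ih =>
      rcases ih with rfl | hab
      · exact .inr hbc
      · exact absurd hbc (h _ _ _ hab)
  · rintro (rfl | hab)
    exacts [.refl, .single hab]

theorem Finset.card_filter_univ_sum {α β : Type*} [Fintype α] [Fintype β]
    (p : α ⊕ β → Prop) [DecidablePred p] :
    #{v | p v} = #{a | p (Sum.inl a)} + #{b | p (Sum.inr b)} := by
  simp only [card_filter, Fintype.sum_sum_type]

section Election

variable {V : Type*} [Fintype V] (Es : Set (V × V))

noncomputable def seedCount (S : Set V) (v : V) : ℕ :=
  #{s | s ∈ S ∧ Reaches Es s v}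

theorem finalScore_of_uniform {k : ℕ} (π : V → Fin k → ℕ) {S : Set V} {m : V → Fin k → ℤ}
    {c : Fin k} {q : ℤ} (hm : ∀ s ∈ S, ∀ i, m s i = if i = c then q else 0) (v : V) (i : Fin k) :
    finalScore Es π S m v i
      = (1 - eps π) * π v i + seedCount Es S v * ((if i = c then q else 0 : ℤ) : ℚ) := by
  rw [finalScore, seedCount, sum_congr rfl fun s hs => by rw [hm s (mem_filter.1 hs).2.1 i],
    sum_const, nsmul_eq_mul]

noncomputable def lead (π : V → Fin 2 → ℕ) (S : Set V) (m : V → Fin 2 → ℤ) (v : V) : ℚ :=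
  finalScore Es π S m v 0 - finalScore Es π S m v 1

def leadShift (c : Fin 2) (q : ℤ) : ℤ := if c = 0 then q else -q

theorem leadShift_eq_one_or_neg_one (c : Fin 2) {q : ℤ} (hq : q = 1 ∨ q = -1) :
    leadShift c q = 1 ∨ leadShift c q = -1 := by
  unfold leadShift
  split_ifs <;> omega

theorem lead_of_uniform (π : V → Fin 2 → ℕ) {S : Set V} {m : V → Fin 2 → ℤ}
    {c : Fin 2} {q : ℤ} (hm : ∀ s ∈ S, ∀ i, m s i = if i = c then q else 0) (v : V) :
    lead Es π S m v = (1 - eps π) * ((π v 0 : ℚ) - π v 1) + leadShift c q * seedCount Es S v := by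
  rw [lead, finalScore_of_uniform Es π hm, finalScore_of_uniform Es π hm, leadShift]
  fin_cases c <;> simp <;> ring

theorem MoV_eq_sum_sign (π : V → Fin 2 → ℕ) (S : Set V) (m : V → Fin 2 → ℤ) :
    MoV Es π S m = ∑ v, (SignType.sign (lead Es π S m v) : ℤ) := by
  have herase : (univ.erase (0 : Fin 2)) = {1} := by decide
  simp only [MoV, herase, sup_singleton, finalVoters, Fin.forall_fin_two, natCast_card_filter,
    ← sum_sub_distrib]
  refine sum_congr rfl fun v _ => ?_
  rcases lt_trichotomy (lead Es π S m v) 0 with h | h | h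
  · rw [sign_neg h]; simp [sub_neg.1 h, (sub_neg.1 h).not_gt]
  · rw [h, sign_zero]; simp [sub_eq_zero.1 h]
  · rw [sign_pos h]; simp [sub_pos.1 h, (sub_pos.1 h).not_gt]

theorem eps_eq_of_forall_le {k : ℕ} {π : V → Fin k → ℕ} {M : ℕ} (hle : ∀ v i, π v i ≤ M)
    {v : V} {i : Fin k} (hv : π v i = M) : eps π = 1 / (1 + M) := by
  have hsup : (univ.sup fun v => univ.sup fun i => π v i) = M :=
    le_antisymm (Finset.sup_le fun v _ => Finset.sup_le fun i _ => hle v i)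
      (hv ▸ (le_sup (f := fun i => π v i) (mem_univ i)).trans
        (le_sup (f := fun v => univ.sup fun i => π v i) (mem_univ v)))
  rw [eps, hsup]

theorem one_sub_eps_pos {k : ℕ} {π : V → Fin k → ℕ} {v : V} {i : Fin k} (h : 0 < π v i) :
    0 < 1 - eps π := by
  have hM : 1 ≤ (univ.sup fun v => univ.sup fun i => π v i) :=
    h.trans_le ((le_sup (f := fun i => π v i) (mem_univ i)).trans
      (le_sup (f := fun v => univ.sup fun i => π v i) (mem_univ v)))
  rw [eps, sub_pos, div_lt_one (by positivity)]
  exact_mod_cast Nat.lt_one_add_iff.2 hM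

end Election

section DkSAnalysis

variable {X : Type*} {G : SimpleGraph X}

theorem reaches_dksEdges_iff {s v : DkSVoter G} :
    Reaches (DkSEdges G) s v ↔ v = s ∨ (s, v) ∈ DkSEdges G := by
  refine Relation.reflTransGen_iff_eq_or_of_forall_not ?_
  rintro a b c ⟨x, e, -, -, rfl⟩ ⟨y, f, -, h, -⟩
  exact Sum.inr_ne_inl h

theorem reaches_inl_inr_iff {x : X} {e : G.edgeSet} :
    Reaches (DkSEdges G) (Sum.inl x) (Sum.inr e) ↔ x ∈ (e : Sym2 X) := by
  rw [reaches_dksEdges_iff]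
  simp [DkSEdges]

theorem reaches_inr_inr_iff {e' e : G.edgeSet} :
    Reaches (DkSEdges G) (Sum.inr e') (Sum.inr e) ↔ e' = e := by
  rw [reaches_dksEdges_iff]
  simp [DkSEdges, eq_comm]

variable [Fintype X] [Fintype G.edgeSet]

variable (G) in
noncomputable def vertexSeeds (S : Set (DkSVoter G)) : Finset X :=
  {x | Sum.inl x ∈ S}

theorem seedCount_inr [DecidableEq X] (S : Set (DkSVoter G)) (e : G.edgeSet) :
    seedCount (DkSEdges G) S (Sum.inr e)
      = #((e : Sym2 X).toFinset ∩ vertexSeeds G S) + if Sum.inr e ∈ S then 1 else 0 := by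
  simp only [seedCount, card_filter_univ_sum, reaches_inl_inr_iff, reaches_inr_inr_iff, vertexSeeds]
  congr 1
  · congr 1; ext x; simp [and_comm]
  · split_ifs with h
    · rw [card_eq_one]
      exact ⟨e, by ext f; simpa using fun hf : f = e => hf ▸ h⟩
    · rw [card_eq_zero, filter_eq_empty_iff]
      rintro _ - ⟨hS, rfl⟩
      exact h hS

theorem eps_dksScores (e : G.edgeSet) : eps (DkSScores G) = 1 / 3 := by
  have hle : ∀ v i, DkSScores G v i ≤ 2 := by
    rintro (x | e) i <;> fin_cases i <;> simp [DkSScores]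
  rw [eps_eq_of_forall_le hle (v := Sum.inr e) (i := 1) rfl]
  norm_num

variable (G) in
noncomputable def twiceReachedEdges (S : Set (DkSVoter G)) : Finset G.edgeSet :=
  {e | 2 ≤ seedCount (DkSEdges G) S (Sum.inr e)}

variable {S : Set (DkSVoter G)} {m : DkSVoter G → Fin 2 → ℤ} {c : Fin 2} {q : ℤ}

theorem lead_inl (hm : ∀ s ∈ S, ∀ i, m s i = if i = c then q else 0) (x : X) :
    lead (DkSEdges G) (DkSScores G) S m (Sum.inl x)
      = (1 - eps (DkSScores G)) + leadShift c q * seedCount (DkSEdges G) S (Sum.inl x) := by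
  rw [lead_of_uniform _ _ hm]
  simp [DkSScores]

theorem lead_inr (hm : ∀ s ∈ S, ∀ i, m s i = if i = c then q else 0) (e : G.edgeSet) :
    lead (DkSEdges G) (DkSScores G) S m (Sum.inr e)
      = -4 / 3 + leadShift c q * seedCount (DkSEdges G) S (Sum.inr e) := by
  rw [lead_of_uniform _ _ hm, eps_dksScores e]
  simp [DkSScores]
  ring

theorem MoV_dks_of_leadShift_eq_one (hm : ∀ s ∈ S, ∀ i, m s i = if i = c then q else 0)
    (hσ : leadShift c q = 1) :
    MoV (DkSEdges G) (DkSScores G) S m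
      = Fintype.card X - Fintype.card G.edgeSet + 2 * #(twiceReachedEdges G S) := by
  have hvertex : ∀ x, SignType.sign (lead (DkSEdges G) (DkSScores G) S m (Sum.inl x)) = 1 :=
    fun x => by
      have hδ := one_sub_eps_pos (π := DkSScores G) (v := Sum.inl x) (i := 0) (by simp [DkSScores])
      rw [lead_inl hm, hσ, sign_pos]
      positivity
  have hedge : ∀ e, (SignType.sign (lead (DkSEdges G) (DkSScores G) S m (Sum.inr e)) : ℤ)
      = if e ∈ twiceReachedEdges G S then 1 else -1 := fun e => by
    rw [lead_inr hm, hσ]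
    simp only [twiceReachedEdges, mem_filter, mem_univ, true_and]
    split_ifs with h
    · have : (2 : ℚ) ≤ seedCount (DkSEdges G) S (Sum.inr e) := by exact_mod_cast h
      rw [sign_pos (by linarith)]; rfl
    · have : (seedCount (DkSEdges G) S (Sum.inr e) : ℚ) ≤ 1 := by
        exact_mod_cast Nat.le_of_lt_succ (not_le.1 h)
      rw [sign_neg (by linarith)]; rfl
  rw [MoV_eq_sum_sign, Fintype.sum_sum_type]
  have hA := (twiceReachedEdges G S).card_le_univ
  simp only [hvertex, hedge, SignType.coe_one, sum_const, card_univ, Int.nsmul_eq_mul, mul_one,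
    sum_ite, subset_univ, filter_mem_eq_of_subset, filter_not, card_sdiff,
    inter_univ]
  rw [Nat.cast_sub hA]
  ring

theorem MoV_dks_le_of_leadShift_eq_neg_one (hm : ∀ s ∈ S, ∀ i, m s i = if i = c then q else 0)
    (hσ : leadShift c q = -1) :
    MoV (DkSEdges G) (DkSScores G) S m ≤ Fintype.card X - Fintype.card G.edgeSet := by
  have hvertex : ∀ s : SignType, (s : ℤ) ≤ 1 := by decide
  have hedge : ∀ e, SignType.sign (lead (DkSEdges G) (DkSScores G) S m (Sum.inr e)) = -1 :=
    fun e => by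
      rw [lead_inr hm, hσ, sign_neg]
      have : (0 : ℚ) ≤ seedCount (DkSEdges G) S (Sum.inr e) := Nat.cast_nonneg _
      push_cast
      linarith
  rw [MoV_eq_sum_sign, Fintype.sum_sum_type]
  have := sum_le_card_nsmul univ
    (fun x => (SignType.sign (lead (DkSEdges G) (DkSScores G) S m (Sum.inl x)) : ℤ)) 1
    fun _ _ => hvertex _
  simp only [hedge, SignType.coe_neg_one, sum_const, card_univ, Int.nsmul_eq_mul,
    mul_one] at this ⊢
  linarith

theorem twiceReachedEdges_empty : twiceReachedEdges G ∅ = ∅ := by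
  simp [twiceReachedEdges, seedCount]

theorem MoV_dks_empty (m : DkSVoter G → Fin 2 → ℤ) :
    MoV (DkSEdges G) (DkSScores G) ∅ m = Fintype.card X - Fintype.card G.edgeSet := by
  simpa [twiceReachedEdges_empty] using
    MoV_dks_of_leadShift_eq_one (S := ∅) (m := m) (c := 0) (q := 1) (by simp) rfl

end DkSAnalysis

section DkSCombinatorics

variable {X : Type*} [DecidableEq X] {G : SimpleGraph X}

theorem card_edge_sdiff_add_card_inter (e : G.edgeSet) (T : Finset X) :
    #((e : Sym2 X).toFinset \ T) + #((e : Sym2 X).toFinset ∩ T) = 2 :=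
  (card_sdiff_add_card_inter _ _).trans
    (Sym2.card_toFinset_of_not_isDiag _ (G.not_isDiag_of_mem_edgeSet e.2))

theorem two_le_card_edge_inter_iff (e : G.edgeSet) (T : Finset X) :
    2 ≤ #((e : Sym2 X).toFinset ∩ T) ↔ ∀ x ∈ (e : Sym2 X), x ∈ T := by
  have h := card_edge_sdiff_add_card_inter e T
  have hsub : (∀ x ∈ (e : Sym2 X), x ∈ T) ↔ #((e : Sym2 X).toFinset \ T) = 0 := by
    simp only [card_eq_zero, sdiff_eq_empty_iff_subset, subset_iff, Sym2.mem_toFinset]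
  rw [hsub]
  omega

variable [Fintype X] [Fintype G.edgeSet]

theorem card_twiceReachedEdges_image_inl (T : Finset X) :
    #(twiceReachedEdges G (Sum.inl '' T)) = edgesWithin G T := by
  have hseeds : vertexSeeds G (Sum.inl '' T) = T := by
    ext
    simp [vertexSeeds]
  simp only [twiceReachedEdges, edgesWithin, seedCount_inr, hseeds, ← two_le_card_edge_inter_iff]
  simp

theorem exists_card_le_edgesWithin (S : Set (DkSVoter G)) :
    ∃ T : Finset X, #T ≤ #{v | v ∈ S} ∧ #(twiceReachedEdges G S) ≤ edgesWithin G T := by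
  set SX := vertexSeeds G S
  set SE : Finset G.edgeSet := {e | Sum.inr e ∈ S}
  set A := twiceReachedEdges G S
  have hA : ∀ e ∈ A, 2 ≤ #((e : Sym2 X).toFinset ∩ SX) + if e ∈ SE then 1 else 0 := by
    intro e he
    simpa [SE, A, twiceReachedEdges, seedCount_inr] using he
  refine ⟨SX ∪ (A ∩ SE).biUnion fun e => (e : Sym2 X).toFinset \ SX, ?_, ?_⟩
  · calc #(SX ∪ (A ∩ SE).biUnion fun e => (e : Sym2 X).toFinset \ SX)
        ≤ #SX + ∑ e ∈ A ∩ SE, #((e : Sym2 X).toFinset \ SX) :=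
          (card_union_le _ _).trans (by gcongr; exact card_biUnion_le)
      _ ≤ #SX + ∑ _e ∈ A ∩ SE, 1 := by
          gcongr with e he
          obtain ⟨heA, heSE⟩ := mem_inter.1 he
          have h2 := hA e heA
          rw [if_pos heSE] at h2
          have := card_edge_sdiff_add_card_inter e SX
          omega
      _ ≤ #SX + #SE := by simpa using card_le_card inter_subset_right
      _ = #{v | v ∈ S} := (card_filter_univ_sum (· ∈ S)).symm
  · refine card_le_card fun e he => mem_filter.2 ⟨mem_univ _, fun x hx => ?_⟩
    by_cases heSE : e ∈ SE
    · by_cases hxSX : x ∈ SX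
      · exact mem_union_left _ hxSX
      · exact mem_union_right _ (mem_biUnion.2
          ⟨e, mem_inter.2 ⟨he, heSE⟩, mem_sdiff.2 ⟨Sym2.mem_toFinset.2 hx, hxSX⟩⟩)
    · have := hA e he
      rw [if_neg heSE, add_zero, two_le_card_edge_inter_iff] at this
      exact mem_union_left _ (this x hx)

end DkSCombinatorics

section DkS

variable {X : Type*} [Fintype X] [DecidableEq X] (G : SimpleGraph X)
  [DecidableRel G.Adj] [Fintype G.edgeSet]

theorem max_deltaMoV_eq_twice_densest_B_subgraph (B : ℕ) :
    IsGreatest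
      { d : ℤ | ∃ (S : Set (DkSVoter G)) (m : DkSVoter G → Fin 2 → ℤ),
          (Finset.univ.filter fun v => v ∈ S).card ≤ B ∧
          (∃ (c : Fin 2) (q : ℤ), (q = 1 ∨ q = -1) ∧
            ∀ s ∈ S, ∀ i : Fin 2, m s i = if i = c then q else 0) ∧
          d = MoV (DkSEdges G) (DkSScores G) S m -
                MoV (DkSEdges G) (DkSScores G) (∅ : Set (DkSVoter G)) m }
      (2 * (((Finset.univ.powerset.filter fun X' : Finset X => X'.card ≤ B).sup
          fun X' => edgesWithin G X' : ℕ) : ℤ)) := by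
  constructor
  · obtain ⟨T, hT, hbest⟩ := exists_mem_eq_sup
      (univ.powerset.filter fun X' : Finset X => #X' ≤ B) ⟨∅, by simp⟩ (edgesWithin G)
    refine ⟨Sum.inl '' T, fun _ i => if i = 0 then 1 else 0, ?_,
      ⟨0, 1, .inl rfl, fun _ _ _ => rfl⟩, ?_⟩
    · rw [card_filter_univ_sum]
      simpa using (mem_filter.1 hT).2
    · rw [MoV_dks_of_leadShift_eq_one (fun _ _ _ => rfl) rfl, MoV_dks_empty,
        card_twiceReachedEdges_image_inl, hbest]
      ring
  · rintro _ ⟨S, m, hS, ⟨c, q, hq, hm⟩, rfl⟩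
    obtain ⟨T, hTS, hT⟩ := exists_card_le_edgesWithin S
    have hbest : edgesWithin G T ≤ (univ.powerset.filter fun X' : Finset X => #X' ≤ B).sup
        fun X' => edgesWithin G X' :=
      le_sup (mem_filter.2 ⟨mem_powerset.2 (subset_univ T), hTS.trans hS⟩)
    rw [MoV_dks_empty]
    rcases leadShift_eq_one_or_neg_one c hq with hσ | hσ
    · rw [MoV_dks_of_leadShift_eq_one hm hσ]
      omega
    · have := MoV_dks_le_of_leadShift_eq_neg_one hm hσ
      omega

end DkS
end

section
/- In the deterministic election model with exactly two candidates c_0, c_1, suppose every seed's message m_s satisfies m_s(0) ≤ 0 and m_s(1) ≥ 0 (i.e., every message is weakly unfavorable to c_0). Then MoV is antitone in the removed edge set: for all E_1 ⊆ E_2 ⊆ E, MoV(S,M,E∖E_2) ≥ MoV(S,M,E∖E_1). In particular ΔMoV^-(E') ≤ ΔMoV^-(E) for every E' ⊆ E, i.e., with unlimited budget removing all edges maximizes ΔMoV^-. -/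
open scoped Classical

/-! Removing edges only shrinks the set of seeds whose message reaches a voter. Since every message
lowers the score of `c₀` and raises that of `c₁`, each voter's final margin `π*(0) - π*(1)` can only
grow, so `V*_{c₀}` grows and `V*_{c₁}` shrinks; with two candidates `MoV = |V*_{c₀}| - |V*_{c₁}|`,
hence `MoV` grows. -/

section

variable {V : Type*}

theorem Reaches.mono {A B : Set (V × V)} (hAB : A ⊆ B) {s v : V} (h : Reaches A s v) :
    Reaches B s v :=
  Relation.ReflTransGen.mono (fun _ _ hab => hAB hab) s v h

variable [Fintype V] {k : ℕ} {π : V → Fin k → ℕ} {S : Set V} {m : V → Fin k → ℤ}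

theorem filter_reaches_subset {A B : Set (V × V)} (hAB : A ⊆ B) (v : V) :
    Finset.univ.filter (fun s => s ∈ S ∧ Reaches A s v) ⊆
      Finset.univ.filter (fun s => s ∈ S ∧ Reaches B s v) :=
  Finset.monotone_filter_right _ fun _ _ h => ⟨h.1, h.2.mono hAB⟩

theorem finalScore_le_of_subset_of_nonneg {A B : Set (V × V)} (hAB : A ⊆ B) {i : Fin k}
    (hi : ∀ s ∈ S, 0 ≤ m s i) (v : V) :
    finalScore A π S m v i ≤ finalScore B π S m v i := by
  unfold finalScore
  apply add_le_add_right
  refine Finset.sum_le_sum_of_subset_of_nonneg (filter_reaches_subset hAB v) fun s hs _ => ?_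
  exact_mod_cast hi s (Finset.mem_filter.mp hs).2.1

theorem finalScore_le_of_subset_of_nonpos {A B : Set (V × V)} (hAB : A ⊆ B) {i : Fin k}
    (hi : ∀ s ∈ S, m s i ≤ 0) (v : V) :
    finalScore B π S m v i ≤ finalScore A π S m v i := by
  unfold finalScore
  apply add_le_add_right
  refine Finset.sum_le_sum_of_subset_of_nonpos' (filter_reaches_subset hAB v) fun s hs _ => ?_
  exact_mod_cast hi s (Finset.mem_filter.mp hs).2.1

theorem finalVoters_subset_of_finalScore_le {A B : Set (V × V)} {c : Fin k}
    (hc : ∀ v, finalScore A π S m v c ≤ finalScore B π S m v c)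
    (hj : ∀ v j, j ≠ c → finalScore B π S m v j ≤ finalScore A π S m v j) :
    finalVoters A π S m c ⊆ finalVoters B π S m c := by
  intro v hv
  simp only [finalVoters, Finset.mem_filter, Finset.mem_univ, true_and] at hv ⊢
  exact fun j hjc => (hj v j hjc).trans_lt ((hv j hjc).trans_le (hc v))

end

section

variable {V : Type*} [Fintype V] {π : V → Fin 2 → ℕ} {S : Set V} {m : V → Fin 2 → ℤ}

theorem MoV_fin_two (Es : Set (V × V)) :
    MoV Es π S m = (finalVoters Es π S m 0).card - (finalVoters Es π S m 1).card := by
  rw [MoV, show Finset.univ.erase (0 : Fin 2) = {1} by decide, Finset.sup_singleton]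

theorem MoV_antitone_fin_two (hm : ∀ s ∈ S, m s 0 ≤ 0 ∧ 0 ≤ m s 1) :
    Antitone fun Es : Set (V × V) => MoV Es π S m := by
  intro A B hAB
  have hne : ∀ j : Fin 2, j ≠ 0 → j = 1 := by decide
  have hne' : ∀ j : Fin 2, j ≠ 1 → j = 0 := by decide
  have hle0 := finalScore_le_of_subset_of_nonpos (π := π) hAB fun s hs => (hm s hs).1
  have hle1 := finalScore_le_of_subset_of_nonneg (π := π) hAB fun s hs => (hm s hs).2
  have h0 : finalVoters B π S m 0 ⊆ finalVoters A π S m 0 :=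
    finalVoters_subset_of_finalScore_le hle0 fun v j hj => hne j hj ▸ hle1 v
  have h1 : finalVoters A π S m 1 ⊆ finalVoters B π S m 1 :=
    finalVoters_subset_of_finalScore_le hle1 fun v j hj => hne' j hj ▸ hle0 v
  simp only [MoV_fin_two]
  have := Finset.card_le_card h0
  have := Finset.card_le_card h1
  omega

end

theorem edge_removal_antitone_two_candidates_general {V : Type*} [Fintype V]
    (Es : Set (V × V)) (π : V → Fin 2 → ℕ)
    (S : Set V) (m : V → Fin 2 → ℤ)
    (hm : ∀ s ∈ S, m s 0 ≤ 0 ∧ 0 ≤ m s 1) :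
    (∀ E1 E2 : Set (V × V), E1 ⊆ E2 → E2 ⊆ Es →
        MoV (Es \ E1) π S m ≤ MoV (Es \ E2) π S m) ∧
    (∀ E' : Set (V × V), E' ⊆ Es →
        MoV (Es \ E') π S m - MoV Es π S m ≤
          MoV (Es \ Es) π S m - MoV Es π S m) := by
  have hanti := MoV_antitone_fin_two (π := π) hm
  refine ⟨fun E1 E2 h12 _ => hanti (Set.sdiff_subset_sdiff_right h12), fun E' hE' => ?_⟩
  linarith [hanti (Set.sdiff_subset_sdiff_right hE' : Es \ Es ⊆ Es \ E')]

/-- With two candidates and every seed's message weakly unfavorable to c₀, MoV is antitone in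
the removed edge set; in particular removing all edges maximizes ΔMoV⁻. -/
theorem edge_removal_antitone_two_candidates {V : Type*} [Fintype V]
    (Es : Set (V × V)) (π : V → Fin 2 → ℕ)
    (hinj : ∀ v : V, π v 0 ≠ π v 1)
    (S : Set V) (m : V → Fin 2 → ℤ)
    (hm : ∀ s ∈ S, m s 0 ≤ 0 ∧ 0 ≤ m s 1) :
    (∀ E1 E2 : Set (V × V), E1 ⊆ E2 → E2 ⊆ Es →
        MoV (Es \ E1) π S m ≤ MoV (Es \ E2) π S m) ∧
    (∀ E' : Set (V × V), E' ⊆ Es →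
        MoV (Es \ E') π S m - MoV Es π S m ≤
          MoV (Es \ Es) π S m - MoV Es π S m) :=
  edge_removal_antitone_two_candidates_general Es π S m hm
end
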